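/- arXiv:1003.3175 — 2 statements merged into one kernel-verified Lean document; each statement's English description precedes it below -/
import Mathlib

section
/- Let Q be a set with binary operations · , \ and / such that for all x, y in Q: (y/x)·x = y, x\(x·y) = y, (y·x)/x = y, and x/(y\x) = y. Then all six quasigroup identities hold in Q; in particular, x·(x\y) = y for all x, y in Q (so (Q, ·, \, /) is an equational quasigroup). -/
section BirkhoffIdentities

variable {Q : Type*} {mul ld rd : Q → Q → Q}

theorem mul_ld_of_mul_rd_of_rd_ld (hC : ∀ x y, mul (rd y x) x = y)
    (hT : ∀ x y, rd x (ld y x) = y) (x y : Q) : mul x (ld x y) = y := by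
  simpa only [hT] using hC (ld x y) y

theorem ld_rd_of_ld_mul_of_mul_rd (hB : ∀ x y, ld x (mul x y) = y)
    (hC : ∀ x y, mul (rd y x) x = y) (x y : Q) : ld (rd x y) x = y := by
  simpa only [hC] using hB (rd x y) y

end BirkhoffIdentities

/-- An algebra (Q, ·, \, /) satisfying the given identities satisfies all six
Birkhoff quasigroup identities (A), (C), (B), (D), (T), (R), i.e. it is an
equational quasigroup. -/
theorem quasigroup_of_CBDT {Q : Type*} (mul ld rd : Q → Q → Q)
    (hC : ∀ x y, mul (rd y x) x = y)
    (hB : ∀ x y, ld x (mul x y) = y)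
    (hD : ∀ x y, rd (mul y x) x = y)
    (hT : ∀ x y, rd x (ld y x) = y) :
    (∀ x y, mul x (ld x y) = y) ∧ (∀ x y, mul (rd y x) x = y) ∧
    (∀ x y, ld x (mul x y) = y) ∧ (∀ x y, rd (mul y x) x = y) ∧
    (∀ x y, rd x (ld y x) = y) ∧ (∀ x y, ld (rd x y) x = y) :=
  ⟨mul_ld_of_mul_rd_of_rd_ld hC hT, hC, hB, hD, hT, ld_rd_of_ld_mul_of_mul_rd hB hC⟩
end

section
/- Let Q be a set with binary operations · , \ and / such that for all x, y in Q: x·(x\y) = y, (y/x)·x = y, (y·x)/x = y, and (x/y)\x = y. Then all six quasigroup identities hold in Q; in particular, x\(x·y) = y for all x, y in Q (so (Q, ·, \, /) is an equational quasigroup). -/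
section

variable {Q : Type*} (mul ld rd : Q → Q → Q)

theorem ld_mul_eq_of_rd_mul_of_ld_rd (hD : ∀ x y, rd (mul y x) x = y)
    (hR : ∀ x y, ld (rd x y) x = y) (x y : Q) : ld x (mul x y) = y :=
  calc ld x (mul x y) = ld (rd (mul x y) y) (mul x y) := by rw [hD]
    _ = y := hR (mul x y) y

theorem rd_ld_eq_of_mul_ld_of_rd_mul (hA : ∀ x y, mul x (ld x y) = y)
    (hD : ∀ x y, rd (mul y x) x = y) (x y : Q) : rd x (ld y x) = y :=
  calc rd x (ld y x) = rd (mul y (ld y x)) (ld y x) := by rw [hA]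
    _ = y := hD (ld y x) y

end

/-- An algebra (Q, ·, \, /) satisfying the given identities satisfies all six
Birkhoff quasigroup identities (A), (C), (B), (D), (T), (R), i.e. it is an
equational quasigroup. -/
theorem quasigroup_of_ACDR {Q : Type*} (mul ld rd : Q → Q → Q)
    (hA : ∀ x y, mul x (ld x y) = y)
    (hC : ∀ x y, mul (rd y x) x = y)
    (hD : ∀ x y, rd (mul y x) x = y)
    (hR : ∀ x y, ld (rd x y) x = y) :
    (∀ x y, mul x (ld x y) = y) ∧ (∀ x y, mul (rd y x) x = y) ∧
    (∀ x y, ld x (mul x y) = y) ∧ (∀ x y, rd (mul y x) x = y) ∧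
    (∀ x y, rd x (ld y x) = y) ∧ (∀ x y, ld (rd x y) x = y) :=
  ⟨hA, hC, ld_mul_eq_of_rd_mul_of_ld_rd mul ld rd hD hR, hD,
    rd_ld_eq_of_mul_ld_of_rd_mul mul ld rd hA hD, hR⟩
end
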